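/- For any finite set of primes P, limsup_{N→∞} (1/N) ∑_{n=1}^N | ∑_{p∈P} 1_{p∣n} − ∑_{p∈P} 1/p |² ≤ C · ∑_{p∈P} 1/p for an absolute constant C. -/

import Mathlib

/-!
Expanding the square, `(∑_{p ∈ P} 1_{p ∣ n} - μ)²` becomes a combination of the indicators
`1_{lcm(p,q) ∣ n}` and `1_{p ∣ n}`, and the mean of `1_{d ∣ n}` over `n ≤ N` tends to `1/d`.
Hence the mean square converges to `∑_{p,q} 1/lcm(p,q) - μ²` with `μ = ∑_p 1/p`. For distinct
primes `lcm(p,q) = pq`, so the double sum is at most `μ² + μ`, and the limit is at most `μ`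
(the theorem holds with `C = 1`).
-/

open Filter Finset Topology

lemma sum_Icc_ite_dvd (d N : ℕ) :
    ∑ n ∈ Icc 1 N, (if d ∣ n then (1 : ℝ) else 0) = ((N / d : ℕ) : ℝ) := by
  rw [← Nat.Ioc_filter_dvd_card_eq_div, ← sum_boole]
  rfl

lemma tendsto_mean_ite_dvd {d : ℕ} (hd : 0 < d) :
    Tendsto (fun N : ℕ => (1 / (N : ℝ)) * ∑ n ∈ Icc 1 N, if d ∣ n then (1 : ℝ) else 0)
      atTop (𝓝 (1 / d)) := by
  have h := (tendsto_nat_floor_mul_div_atTop (R := ℝ) (a := 1 / d) (by positivity)).comp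
    tendsto_natCast_atTop_atTop
  refine h.congr fun N => ?_
  simp only [Function.comp_apply, sum_Icc_ite_dvd, one_div_mul_eq_div,
    Nat.floor_div_eq_div]

lemma sq_sum_ite_dvd (P : Finset ℕ) (n : ℕ) :
    (∑ p ∈ P, if p ∣ n then (1 : ℝ) else 0) ^ 2
      = ∑ p ∈ P, ∑ q ∈ P, if p.lcm q ∣ n then (1 : ℝ) else 0 := by
  rw [sq, sum_mul_sum]
  refine sum_congr rfl fun p _ => sum_congr rfl fun q _ => ?_
  by_cases hp : p ∣ n <;> by_cases hq : q ∣ n <;> simp [hp, hq, Nat.lcm_dvd_iff]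

lemma sq_sum_ite_dvd_sub (P : Finset ℕ) (μ : ℝ) (n : ℕ) :
    (∑ p ∈ P, (if p ∣ n then (1 : ℝ) else 0) - μ) ^ 2
      = ∑ p ∈ P, ∑ q ∈ P, (if p.lcm q ∣ n then (1 : ℝ) else 0)
        - 2 * μ * ∑ p ∈ P, (if p ∣ n then (1 : ℝ) else 0) + μ ^ 2 := by
  rw [sub_sq, sq_sum_ite_dvd]
  ring

lemma tendsto_mean_sq_sum_ite_dvd_sub {P : Finset ℕ} (hP : ∀ p ∈ P, 0 < p) (μ : ℝ) :
    Tendsto (fun N : ℕ => (1 / (N : ℝ)) * ∑ n ∈ Icc 1 N,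
        (∑ p ∈ P, (if p ∣ n then (1 : ℝ) else 0) - μ) ^ 2) atTop
      (𝓝 (∑ p ∈ P, ∑ q ∈ P, (1 : ℝ) / p.lcm q - 2 * μ * ∑ p ∈ P, (1 : ℝ) / p + μ ^ 2)) := by
  have hlcm := tendsto_finsetSum P fun p hp => tendsto_finsetSum P fun q hq =>
    tendsto_mean_ite_dvd (Nat.lcm_pos (hP p hp) (hP q hq))
  have hdvd := tendsto_finsetSum P fun p hp => tendsto_mean_ite_dvd (hP p hp)
  refine ((hlcm.sub (hdvd.const_mul (2 * μ))).add tendsto_const_nhds).congr' ?_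
  filter_upwards [eventually_ne_atTop 0] with N hN
  have hlcm_comm : ∑ n ∈ Icc 1 N, ∑ p ∈ P, ∑ q ∈ P, (if p.lcm q ∣ n then (1 : ℝ) else 0)
      = ∑ p ∈ P, ∑ q ∈ P, ∑ n ∈ Icc 1 N, if p.lcm q ∣ n then (1 : ℝ) else 0 := by
    rw [sum_comm]
    exact sum_congr rfl fun p _ => sum_comm
  simp only [sq_sum_ite_dvd_sub, sum_add_distrib, sum_sub_distrib, ← mul_sum, hlcm_comm,
    sum_comm (s := Icc 1 N) (t := P), sum_const, Nat.card_Icc, Nat.add_sub_cancel, nsmul_eq_mul]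
  field_simp

lemma one_div_lcm_le_of_prime {p q : ℕ} (hp : p.Prime) (hq : q.Prime) :
    (1 : ℝ) / p.lcm q ≤ 1 / p * (1 / q) + if p = q then (1 : ℝ) / p else 0 := by
  by_cases h : p = q
  · subst h
    rw [Nat.lcm_self, if_pos rfl]
    have : (0 : ℝ) ≤ 1 / p * (1 / p) := by positivity
    linarith
  · rw [(Nat.coprime_primes hp hq).mpr h |>.lcm_eq_mul, if_neg h, add_zero, Nat.cast_mul,
      one_div_mul_one_div]

lemma sum_sum_one_div_lcm_le_of_prime {P : Finset ℕ} (hP : ∀ p ∈ P, p.Prime) :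
    ∑ p ∈ P, ∑ q ∈ P, (1 : ℝ) / p.lcm q ≤ (∑ p ∈ P, (1 : ℝ) / p) ^ 2 + ∑ p ∈ P, (1 : ℝ) / p :=
  calc ∑ p ∈ P, ∑ q ∈ P, (1 : ℝ) / p.lcm q
      ≤ ∑ p ∈ P, ∑ q ∈ P, (1 / p * (1 / q) + if p = q then (1 : ℝ) / p else 0) :=
        sum_le_sum fun p hp => sum_le_sum fun q hq => one_div_lcm_le_of_prime (hP p hp) (hP q hq)
    _ = (∑ p ∈ P, (1 : ℝ) / p) ^ 2 + ∑ p ∈ P, (1 : ℝ) / p := by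
        simp only [sum_add_distrib, sum_ite_eq, ← sum_mul_sum, ← sq]
        exact congrArg _ (sum_congr rfl fun p hp => if_pos hp)

theorem stmt_6 :
    ∃ C : ℝ, 0 < C ∧ ∀ (P : Finset ℕ), (∀ p ∈ P, Nat.Prime p) →
      Filter.limsup (fun N : ℕ => (1 / (N : ℝ)) * ∑ n ∈ Icc 1 N,
          (∑ p ∈ P, (if p ∣ n then (1 : ℝ) else 0) - ∑ p ∈ P, (1 : ℝ) / p) ^ 2)
        atTop
      ≤ C * ∑ p ∈ P, (1 : ℝ) / p := by
  refine ⟨1, one_pos, fun P hP => ?_⟩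
  rw [(tendsto_mean_sq_sum_ite_dvd_sub (fun p hp => (hP p hp).pos) _).limsup_eq, one_mul]
  linarith [sum_sum_one_div_lcm_le_of_prime hP]
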